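/- For t = 1, …, T let h_t : ℝ^d → ℝ be nonnegative, m-strongly convex, l-strongly smooth, and minimized at 0; let Ω_t ⊆ ℝ^d be nonempty, closed, and convex; let v_t ∈ Ω_t; and set f_t(y) := h_t(y − v_t). Define the sequence (y_t) extending the fixed initial points by letting y_t be the metric projection of Σ_{i=1}^p C_i v_{t−i} onto Ω_t (where v_s equals the initial point for s ≤ 0). Then for every η > 0 and every comparator sequence (y*_t) extending the same initial points, Σ_{t=1}^T [ f_t(y_t) + (1/2)‖y_t − Σ_{i=1}^p C_i y_{t−i}‖² ] ≤ (1 + η)·(1 + (1 + α)²/m) · Σ_{t=1}^T [ f_t(y*_t) + (1/2)‖y*_t − Σ_{i=1}^p C_i y*_{t−i}‖² ] + ( l + (1 + 1/η)·α² − (1 + η) ) · Σ_{t=1}^T (1/2)‖y_t − v_t‖². -/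

import Mathlib

/-!
Write `s_t = ∑ C_i v_{t-i}`. Smoothness at the minimiser of `h_t` bounds the algorithm's hitting
cost by `h_t(0) + (l/2)‖y_t - v_t‖²`, and strong convexity bounds the comparator's from below by
`h_t(0) + (m/2)‖y*_t - v_t‖²`. Since `v_t ∈ Ω_t`, the obtuse-angle property of the projection
gives `‖y_t - s_t‖² + ‖y_t - v_t‖² ≤ ‖v_t - s_t‖²`. The switching costs of `y` and `y*` differ
from `‖y_t - s_t‖` and `‖v_t - s_t‖` by lagged deviations `∑ ‖C_i‖ ‖x_{t-i} - v_{t-i}‖`; as every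
sequence agrees with `v` before time `1`, Cauchy–Schwarz bounds the sum of their squares by `α²`
times the summed squared deviations. The two sides are balanced with
`(a + b)² ≤ (1 + ε) a² + (1 + 1/ε) b²`, for `ε = η` and for `ε = (1 + α)² / m`.
-/

open Finset Filter Topology

lemma add_sq_le_one_add_mul_sq_add (x z : ℝ) {ε : ℝ} (hε : 0 < ε) :
    (x + z) ^ 2 ≤ (1 + ε) * x ^ 2 + (1 + 1 / ε) * z ^ 2 := by
  have key : (1 + ε) * x ^ 2 + (1 + 1 / ε) * z ^ 2 - (x + z) ^ 2 = (ε * x - z) ^ 2 / ε := by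
    field_simp; ring
  have : 0 ≤ (ε * x - z) ^ 2 / ε := by positivity
  linarith

lemma sum_sq_le_of_le_add {ι : Type*} (s : Finset ι) {a b c : ι → ℝ} {ε : ℝ} (hε : 0 < ε)
    (ha : ∀ i ∈ s, 0 ≤ a i) (habc : ∀ i ∈ s, a i ≤ b i + c i) :
    ∑ i ∈ s, a i ^ 2 ≤ (1 + ε) * ∑ i ∈ s, b i ^ 2 + (1 + 1 / ε) * ∑ i ∈ s, c i ^ 2 := by
  rw [mul_sum, mul_sum, ← sum_add_distrib]
  gcongr with i hi
  exact (pow_le_pow_left₀ (ha i hi) (habc i hi) 2).trans (add_sq_le_one_add_mul_sq_add _ _ hε)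

lemma sum_add_sq_le_of_sum_sq_le {ι : Type*} (s : Finset ι) (a b : ι → ℝ) {β : ℝ} (hβ : 0 ≤ β)
    (hb : ∑ i ∈ s, b i ^ 2 ≤ β ^ 2 * ∑ i ∈ s, a i ^ 2) :
    ∑ i ∈ s, (a i + b i) ^ 2 ≤ (1 + β) ^ 2 * ∑ i ∈ s, a i ^ 2 := by
  have hA : 0 ≤ ∑ i ∈ s, a i ^ 2 := sum_nonneg fun i _ => sq_nonneg _
  have hab : ∑ i ∈ s, a i * b i ≤ β * ∑ i ∈ s, a i ^ 2 := by
    refine (abs_le_of_sq_le_sq' ?_ (by positivity)).2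
    calc (∑ i ∈ s, a i * b i) ^ 2 ≤ (∑ i ∈ s, a i ^ 2) * ∑ i ∈ s, b i ^ 2 :=
          sum_mul_sq_le_sq_mul_sq s a b
      _ ≤ (∑ i ∈ s, a i ^ 2) * (β ^ 2 * ∑ i ∈ s, a i ^ 2) := by gcongr
      _ = (β * ∑ i ∈ s, a i ^ 2) ^ 2 := by ring
  have hexp : ∑ i ∈ s, (a i + b i) ^ 2
      = ∑ i ∈ s, a i ^ 2 + 2 * ∑ i ∈ s, a i * b i + ∑ i ∈ s, b i ^ 2 := by
    simp only [add_sq, sum_add_distrib, mul_sum, mul_assoc]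
  rw [hexp]
  nlinarith

lemma sum_Icc_comp_sub_le (T : ℤ) {g : ℤ → ℝ} (hg : ∀ s, 0 ≤ g s) (hg0 : ∀ s ≤ 0, g s = 0)
    {k : ℤ} (hk : 0 ≤ k) :
    ∑ t ∈ Icc 1 T, g (t - k) ≤ ∑ t ∈ Icc 1 T, g t := by
  calc ∑ t ∈ Icc 1 T, g (t - k) = ∑ t ∈ Icc (1 - k) (T - k), g t := by
        have : Icc (1 - k) (T - k) = (Icc 1 T).image (· - k) := by
          simp only [sub_eq_add_neg]; exact (image_add_right_Icc 1 T (-k)).symm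
        rw [this, sum_image fun _ _ _ _ h => by simpa using h]
    _ ≤ ∑ t ∈ Icc (1 - k) T, g t :=
        sum_le_sum_of_subset_of_nonneg (Icc_subset_Icc le_rfl (by omega)) fun t _ _ => hg t
    _ = ∑ t ∈ Icc 1 T, g t := by
        refine (sum_subset (Icc_subset_Icc (by omega) le_rfl) fun t ht hnot => hg0 t ?_).symm
        simp only [mem_Icc] at ht hnot
        omega

lemma sum_sq_sum_mul_comp_sub_le {J : Type*} [Fintype J] (T : ℤ) {c : J → ℝ}
    (hc : ∀ j, 0 ≤ c j) {k : J → ℤ} (hk : ∀ j, 0 ≤ k j) {g : ℤ → ℝ} (hg0 : ∀ s ≤ 0, g s = 0) :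
    ∑ t ∈ Icc 1 T, (∑ j, c j * g (t - k j)) ^ 2 ≤ (∑ j, c j) ^ 2 * ∑ t ∈ Icc 1 T, g t ^ 2 := by
  calc ∑ t ∈ Icc 1 T, (∑ j, c j * g (t - k j)) ^ 2
      ≤ ∑ t ∈ Icc 1 T, (∑ j, c j) * ∑ j, c j * g (t - k j) ^ 2 := by
        gcongr with t
        exact sum_sq_le_sum_mul_sum_of_sq_le_mul _ (fun j _ => hc j)
          (fun j _ => mul_nonneg (hc j) (sq_nonneg _)) fun j _ => le_of_eq (by ring)
    _ = (∑ j, c j) * ∑ j, c j * ∑ t ∈ Icc 1 T, g (t - k j) ^ 2 := by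
        rw [← mul_sum, sum_comm]; simp only [mul_sum]
    _ ≤ (∑ j, c j) * ∑ j, c j * ∑ t ∈ Icc 1 T, g t ^ 2 := by
        refine mul_le_mul_of_nonneg_left (sum_le_sum fun j _ => ?_) (sum_nonneg fun j _ => hc j)
        exact mul_le_mul_of_nonneg_left (sum_Icc_comp_sub_le T (fun s => sq_nonneg (g s))
          (fun s hs => by simp [hg0 s hs]) (hk j)) (hc j)
    _ = (∑ j, c j) ^ 2 * ∑ t ∈ Icc 1 T, g t ^ 2 := by rw [← sum_mul]; ring

lemma StrongConvexOn.add_mul_norm_sub_sq_le_of_isMinOn {E : Type*} [NormedAddCommGroup E]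
    [NormedSpace ℝ E] {s : Set E} {m : ℝ} {f : E → ℝ} (hf : StrongConvexOn s m f) {x₀ z : E}
    (hx₀ : x₀ ∈ s) (hz : z ∈ s) (hmin : IsMinOn f s x₀) :
    f x₀ + m / 2 * ‖z - x₀‖ ^ 2 ≤ f z := by
  -- compare `f` at `x₀ + θ • (z - x₀)` with `f x₀`, then let `θ → 0`
  have hlow : ∀ θ ∈ Set.Ioo (0 : ℝ) 1, f x₀ + m / 2 * (1 - θ) * ‖z - x₀‖ ^ 2 ≤ f z := by
    rintro θ ⟨hθ0, hθ1⟩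
    have hconv := hf.2 hz hx₀ hθ0.le (sub_nonneg.2 hθ1.le) (add_sub_cancel θ 1)
    have hmid := hmin (hf.1 hz hx₀ hθ0.le (sub_nonneg.2 hθ1.le) (add_sub_cancel θ 1))
    simp only [smul_eq_mul, Set.mem_ofPred_eq] at hconv hmid
    have : θ * (f x₀ + m / 2 * (1 - θ) * ‖z - x₀‖ ^ 2) ≤ θ * f z := by nlinarith
    exact le_of_mul_le_mul_left this hθ0
  have hlim : Tendsto (fun θ : ℝ => f x₀ + m / 2 * (1 - θ) * ‖z - x₀‖ ^ 2) (𝓝[>] 0)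
      (𝓝 (f x₀ + m / 2 * ‖z - x₀‖ ^ 2)) := by
    have hcont : Continuous fun θ : ℝ => f x₀ + m / 2 * (1 - θ) * ‖z - x₀‖ ^ 2 := by fun_prop
    simpa using (hcont.tendsto 0).mono_left nhdsWithin_le_nhds
  exact le_of_tendsto hlim (eventually_of_mem (Ioo_mem_nhdsGT one_pos) hlow)

lemma IsLocalMin.le_add_mul_norm_sub_sq {E : Type*} [NormedAddCommGroup E] [NormedSpace ℝ E]
    {f : E → ℝ} {x₀ z : E} {l : ℝ} (hmin : IsLocalMin f x₀)
    (hsmooth : f z ≤ f x₀ + fderiv ℝ f x₀ (z - x₀) + l / 2 * ‖z - x₀‖ ^ 2) :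
    f z ≤ f x₀ + l / 2 * ‖z - x₀‖ ^ 2 := by
  simpa [hmin.fderiv_eq_zero] using hsmooth

lemma norm_sub_sq_add_norm_sub_sq_le_of_isMinOn {F : Type*} [NormedAddCommGroup F]
    [InnerProductSpace ℝ F] {K : Set F} (hK : Convex ℝ K) {y s v : F} (hy : y ∈ K) (hv : v ∈ K)
    (hmin : IsMinOn (‖· - s‖) K y) :
    ‖y - s‖ ^ 2 + ‖y - v‖ ^ 2 ≤ ‖v - s‖ ^ 2 := by
  have hinf := hmin.iInf_eq hy
  simp only [norm_sub_rev _ s] at hinf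
  have hobtuse : inner ℝ (s - y) (v - y) ≤ 0 :=
    (norm_eq_iInf_iff_real_inner_le_zero hK hy).1 hinf.symm v hv
  have hexp : ‖v - s‖ ^ 2 = ‖v - y‖ ^ 2 - 2 * inner ℝ (v - y) (s - y) + ‖s - y‖ ^ 2 := by
    rw [← norm_sub_sq_real]; congr 2; abel
  rw [hexp, real_inner_comm, norm_sub_rev y s, norm_sub_rev y v]
  linarith

section Lag

variable {E : Type*} [NormedAddCommGroup E] [NormedSpace ℝ E] {p : ℕ}

/-- `C i` acts on the lag `i + 1`: it is the paper's `C_{i+1}`. -/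
def lagSum (C : Fin p → E →L[ℝ] E) (x : ℤ → E) (t : ℤ) : E :=
  ∑ i : Fin p, C i (x (t - 1 - ((i : ℕ) : ℤ)))

variable (C : Fin p → E →L[ℝ] E)

lemma norm_lagSum_sub_le (x w : ℤ → E) (t : ℤ) :
    ‖lagSum C x t - lagSum C w t‖
      ≤ ∑ i : Fin p, ‖C i‖ * ‖x (t - 1 - ((i : ℕ) : ℤ)) - w (t - 1 - ((i : ℕ) : ℤ))‖ := by
  rw [lagSum, lagSum, ← sum_sub_distrib]
  refine (norm_sum_le _ _).trans (sum_le_sum fun i _ => ?_)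
  rw [← map_sub]
  exact (C i).le_opNorm _

lemma sum_norm_lagSum_sub_sq_le {α : ℝ} (hα : ∑ i, ‖C i‖ ≤ α) {x w : ℤ → E}
    (hxw : ∀ s ≤ 0, x s = w s) (T : ℤ) :
    ∑ t ∈ Icc 1 T, ‖lagSum C x t - lagSum C w t‖ ^ 2
      ≤ α ^ 2 * ∑ t ∈ Icc 1 T, ‖x t - w t‖ ^ 2 := by
  calc ∑ t ∈ Icc 1 T, ‖lagSum C x t - lagSum C w t‖ ^ 2
      ≤ ∑ t ∈ Icc 1 T,
          (∑ i : Fin p,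
            ‖C i‖ * ‖x (t - (1 + ((i : ℕ) : ℤ))) - w (t - (1 + ((i : ℕ) : ℤ)))‖) ^ 2 := by
        gcongr with t
        simpa only [sub_sub] using norm_lagSum_sub_le C x w t
    _ ≤ (∑ i, ‖C i‖) ^ 2 * ∑ t ∈ Icc 1 T, ‖x t - w t‖ ^ 2 :=
        sum_sq_sum_mul_comp_sub_le T (fun i => norm_nonneg _) (fun i => by positivity)
          (g := fun s => ‖x s - w s‖) fun s hs => by simp [hxw s hs]
    _ ≤ α ^ 2 * ∑ t ∈ Icc 1 T, ‖x t - w t‖ ^ 2 := by gcongr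

lemma half_sum_norm_sub_lagSum_sq_le {v x : ℤ → E} {a b : ℤ → ℝ} {α m : ℝ} (T : ℤ)
    (hα : ∑ i, ‖C i‖ ≤ α) (hm : 0 < m) (hxv : ∀ s ≤ 0, x s = v s)
    (hab : ∀ t ∈ Icc 1 T, a t + m / 2 * ‖x t - v t‖ ^ 2 ≤ b t) :
    1 / 2 * ∑ t ∈ Icc 1 T, ‖v t - lagSum C v t‖ ^ 2
      ≤ (1 + (1 + α) ^ 2 / m) * (∑ t ∈ Icc 1 T, b t
          + 1 / 2 * ∑ t ∈ Icc 1 T, ‖x t - lagSum C x t‖ ^ 2 - ∑ t ∈ Icc 1 T, a t) := by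
  have hα0 : 0 ≤ α := (sum_nonneg fun i _ => norm_nonneg (C i)).trans hα
  set κ := (1 + α) ^ 2 / m with hκ
  have hκ0 : 0 < κ := by positivity
  have hgap : m / 2 * ∑ t ∈ Icc 1 T, ‖x t - v t‖ ^ 2
      ≤ ∑ t ∈ Icc 1 T, b t - ∑ t ∈ Icc 1 T, a t := by
    rw [mul_sum, ← sum_sub_distrib]
    exact sum_le_sum fun t ht => by linarith [hab t ht]
  have hsplit := sum_sq_le_of_le_add (Icc 1 T) hκ0
    (a := fun t => ‖v t - lagSum C v t‖) (b := fun t => ‖x t - lagSum C x t‖)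
    (c := fun t => ‖x t - v t‖ + ‖lagSum C x t - lagSum C v t‖) (fun t _ => norm_nonneg _)
    fun t _ => by
      calc ‖v t - lagSum C v t‖
          = ‖(x t - lagSum C x t) + ((v t - x t) + (lagSum C x t - lagSum C v t))‖ := by
            congr 1; abel
        _ ≤ _ := (norm_add_le _ _).trans (add_le_add_right (norm_add_le _ _) _)
        _ = _ := by rw [norm_sub_rev (v t)]
  have hmink := sum_add_sq_le_of_sum_sq_le (Icc 1 T) (fun t => ‖x t - v t‖)
    (fun t => ‖lagSum C x t - lagSum C v t‖) hα0 (sum_norm_lagSum_sub_sq_le C hα hxv T)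
  calc 1 / 2 * ∑ t ∈ Icc 1 T, ‖v t - lagSum C v t‖ ^ 2
      ≤ 1 / 2 * ((1 + κ) * ∑ t ∈ Icc 1 T, ‖x t - lagSum C x t‖ ^ 2
          + (1 + 1 / κ) * ((1 + α) ^ 2 * ∑ t ∈ Icc 1 T, ‖x t - v t‖ ^ 2)) := by
        gcongr
        exact hsplit.trans (by gcongr)
    _ = (1 + κ) * (1 / 2 * ∑ t ∈ Icc 1 T, ‖x t - lagSum C x t‖ ^ 2
          + m / 2 * ∑ t ∈ Icc 1 T, ‖x t - v t‖ ^ 2) := by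
        rw [hκ]; field_simp; ring
    _ ≤ _ := by gcongr; linarith

end Lag

lemma sum_norm_sub_lagSum_sq_le_of_isProj {E : Type*} [NormedAddCommGroup E]
    [InnerProductSpace ℝ E] {p : ℕ} (C : Fin p → E →L[ℝ] E) {K : ℤ → Set E} {v y : ℤ → E}
    {α η : ℝ} (T : ℤ)
    (hα : ∑ i, ‖C i‖ ≤ α) (hη : 0 < η) (hK : ∀ t ∈ Icc 1 T, Convex ℝ (K t))
    (hvK : ∀ t ∈ Icc 1 T, v t ∈ K t)
    (hproj : ∀ t ∈ Icc 1 T, y t ∈ K t ∧ ∀ z ∈ K t, ‖y t - lagSum C v t‖ ≤ ‖z - lagSum C v t‖)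
    (hyv : ∀ s ≤ 0, y s = v s) :
    ∑ t ∈ Icc 1 T, ‖y t - lagSum C y t‖ ^ 2
      ≤ (1 + η) * (∑ t ∈ Icc 1 T, ‖v t - lagSum C v t‖ ^ 2 - ∑ t ∈ Icc 1 T, ‖y t - v t‖ ^ 2)
        + (1 + 1 / η) * (α ^ 2 * ∑ t ∈ Icc 1 T, ‖y t - v t‖ ^ 2) := by
  have hnearest : ∑ t ∈ Icc 1 T, ‖y t - lagSum C v t‖ ^ 2
      ≤ ∑ t ∈ Icc 1 T, ‖v t - lagSum C v t‖ ^ 2 - ∑ t ∈ Icc 1 T, ‖y t - v t‖ ^ 2 := by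
    rw [← sum_sub_distrib]
    refine sum_le_sum fun t ht => ?_
    obtain ⟨hyK, hmin⟩ := hproj t ht
    have := norm_sub_sq_add_norm_sub_sq_le_of_isMinOn (hK t ht) hyK (hvK t ht)
      (isMinOn_iff.2 hmin)
    linarith
  calc ∑ t ∈ Icc 1 T, ‖y t - lagSum C y t‖ ^ 2
      ≤ (1 + η) * ∑ t ∈ Icc 1 T, ‖y t - lagSum C v t‖ ^ 2
        + (1 + 1 / η) * ∑ t ∈ Icc 1 T, ‖lagSum C y t - lagSum C v t‖ ^ 2 :=
        sum_sq_le_of_le_add _ hη (fun t _ => norm_nonneg _) fun t _ => by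
          rw [norm_sub_rev (lagSum C y t)]
          exact norm_sub_le_norm_sub_add_norm_sub _ _ _
    _ ≤ _ := add_le_add (mul_le_mul_of_nonneg_left hnearest (by positivity))
        (mul_le_mul_of_nonneg_left (sum_norm_lagSum_sub_sq_le C hα hyv T) (by positivity))


theorem stmt13
    (d p T : ℕ)
    (C : Fin p → (EuclideanSpace ℝ (Fin d) →L[ℝ] EuclideanSpace ℝ (Fin d)))
    (α : ℝ) (hα : α = ∑ i : Fin p, ‖C i‖)
    (m l : ℝ) (hm : 0 < m)
    (h : ℤ → EuclideanSpace ℝ (Fin d) → ℝ)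
    (Ω : ℤ → Set (EuclideanSpace ℝ (Fin d)))
    (v : ℤ → EuclideanSpace ℝ (Fin d))
    -- each `h t` is nonnegative, `m`-strongly convex, `l`-strongly smooth, minimized at `0`
    (hnonneg : ∀ t ∈ Finset.Icc (1 : ℤ) (T : ℤ), ∀ z, 0 ≤ h t z)
    (hconv : ∀ t ∈ Finset.Icc (1 : ℤ) (T : ℤ),
      ConvexOn ℝ Set.univ (fun x => h t x - m / 2 * ‖x‖ ^ 2))
    (hsmooth : ∀ t ∈ Finset.Icc (1 : ℤ) (T : ℤ), ∀ x z,
      h t z ≤ h t x + fderiv ℝ (h t) x (z - x) + l / 2 * ‖z - x‖ ^ 2)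
    (hmin0 : ∀ t ∈ Finset.Icc (1 : ℤ) (T : ℤ), ∀ z, h t 0 ≤ h t z)
    -- each `Ω t` is nonempty, closed and convex, and contains `v t`
    (hΩ : ∀ t ∈ Finset.Icc (1 : ℤ) (T : ℤ),
      (Ω t).Nonempty ∧ IsClosed (Ω t) ∧ Convex ℝ (Ω t))
    (hvΩ : ∀ t ∈ Finset.Icc (1 : ℤ) (T : ℤ), v t ∈ Ω t)
    -- the hitting cost `f t y = h t (y − v t)`
    (f : ℤ → EuclideanSpace ℝ (Fin d) → ℝ)
    (hf : ∀ t, ∀ z, f t z = h t (z - v t))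
    (y₀ y ystar : ℤ → EuclideanSpace ℝ (Fin d))
    -- `v`, `y` and the comparator extend the fixed initial points
    (hvinit : ∀ s : ℤ, s ≤ 0 → v s = y₀ s)
    (hyinit : ∀ s : ℤ, s ≤ 0 → y s = y₀ s)
    (hystarinit : ∀ s : ℤ, s ≤ 0 → ystar s = y₀ s)
    -- `y t` is the metric projection of `∑ C_i v_{t-i}` onto `Ω t`
    (hproj : ∀ t ∈ Finset.Icc (1 : ℤ) (T : ℤ),
      y t ∈ Ω t ∧ ∀ z ∈ Ω t,
        ‖y t - ∑ i : Fin p, C i (v (t - 1 - ((i : ℕ) : ℤ)))‖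
          ≤ ‖z - ∑ i : Fin p, C i (v (t - 1 - ((i : ℕ) : ℤ)))‖)
    (η : ℝ) (hη : 0 < η) :
    ∑ t ∈ Finset.Icc (1 : ℤ) (T : ℤ),
        (f t (y t) + 1 / 2 * ‖y t - ∑ i : Fin p, C i (y (t - 1 - ((i : ℕ) : ℤ)))‖ ^ 2)
      ≤ (1 + η) * (1 + (1 + α) ^ 2 / m)
          * ∑ t ∈ Finset.Icc (1 : ℤ) (T : ℤ),
              (f t (ystar t)
                + 1 / 2 * ‖ystar t - ∑ i : Fin p, C i (ystar (t - 1 - ((i : ℕ) : ℤ)))‖ ^ 2)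
        + (l + (1 + 1 / η) * α ^ 2 - (1 + η))
          * ∑ t ∈ Finset.Icc (1 : ℤ) (T : ℤ), (1 / 2 * ‖y t - v t‖ ^ 2) := by
  have hyv : ∀ s ≤ 0, y s = v s := fun s hs => (hyinit s hs).trans (hvinit s hs).symm
  have hystarv : ∀ s ≤ 0, ystar s = v s :=
    fun s hs => (hystarinit s hs).trans (hvinit s hs).symm
  have hcost : ∀ t ∈ Icc (1 : ℤ) T, f t (y t) ≤ h t 0 + l / 2 * ‖y t - v t‖ ^ 2 := fun t ht => by
    have hloc : IsLocalMin (h t) 0 := Eventually.of_forall (hmin0 t ht)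
    simpa [hf] using hloc.le_add_mul_norm_sub_sq (hsmooth t ht 0 (y t - v t))
  have hcost_star : ∀ t ∈ Icc (1 : ℤ) T, h t 0 + m / 2 * ‖ystar t - v t‖ ^ 2 ≤ f t (ystar t) :=
    fun t ht => by
      simpa [hf] using (strongConvexOn_iff_convex.2 (hconv t ht)).add_mul_norm_sub_sq_le_of_isMinOn
        (Set.mem_univ 0) (Set.mem_univ (ystar t - v t)) fun z _ => hmin0 t ht z
  have halg := sum_norm_sub_lagSum_sq_le_of_isProj C T hα.ge hη (fun t ht => (hΩ t ht).2.2)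
    hvΩ hproj hyv
  have hcmp := half_sum_norm_sub_lagSum_sq_le C T hα.ge hm hystarv hcost_star
  have hcost_sum := sum_le_sum hcost
  have hH0 : 0 ≤ ∑ t ∈ Icc (1 : ℤ) T, h t 0 := sum_nonneg fun t ht => hnonneg t ht 0
  have hfactor : 1 ≤ (1 + η) * (1 + (1 + α) ^ 2 / m) := by
    nlinarith [(by positivity : 0 ≤ (1 + α) ^ 2 / m)]
  simp only [lagSum] at halg hcmp
  simp only [sum_add_distrib, ← mul_sum] at hcost_sum ⊢
  linarith [mul_le_mul_of_nonneg_left hcmp (by positivity : (0 : ℝ) ≤ 1 + η),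
    mul_le_mul_of_nonneg_right hfactor hH0]
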